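/- Let σ₀ < 0, μ₀ ≠ 0, w₁ > 0, and define V̂(θ,x) = (1/σ₀)(cos θ − 1) + (w₁/2)(x − (μ₀/σ₀) sin θ)². Then the Hessian of V̂ at (0,0) equals the matrix [[(μ₀²/σ₀²) w₁ − 1/σ₀, −(μ₀/σ₀) w₁], [−(μ₀/σ₀) w₁, w₁]], and this matrix is positive definite. -/

import Mathlib

/-!
With `c = 1/σ₀` and `k = μ₀/σ₀`, the potential is `c (cos θ - 1) + (w/2) (x - k sin θ)²`. Its
gradient is `(-c sin θ - w k cos θ (x - k sin θ), w (x - k sin θ))`, and differentiating once more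
at the origin, where `sin = 0` and `cos = 1`, gives the Hessian `[[k² w - c, -k w], [-k w, w]]`.
Its quadratic form is `w (x - k θ)² - c θ²`, a sum of two squares with positive weights when
`c < 0 < w`, and it vanishes only at the origin.
-/

noncomputable section

open Real Matrix

/-- The coordinate directions in `ℝ × ℝ` (index `0` is `θ`, index `1` is `x`). -/
def coordDir : Fin 2 → ℝ × ℝ := ![(1, 0), (0, 1)]

namespace ControlledPotential

open ContinuousLinearMap

variable (c k w : ℝ)

def potential (q : ℝ × ℝ) : ℝ :=
  c * (cos q.1 - 1) + w / 2 * (q.2 - k * sin q.1) ^ 2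

def hessianAtOrigin : Matrix (Fin 2) (Fin 2) ℝ :=
  !![k ^ 2 * w - c, -k * w;
     -k * w, w]

lemma hasFDerivAt_snd_sub_mul_sin_fst (p : ℝ × ℝ) :
    HasFDerivAt (fun q : ℝ × ℝ => q.2 - k * sin q.1)
      (snd ℝ ℝ ℝ - (k * cos p.1) • fst ℝ ℝ ℝ) p := by
  have hsin : HasFDerivAt (fun q : ℝ × ℝ => sin q.1) (cos p.1 • fst ℝ ℝ ℝ) p :=
    (hasDerivAt_sin p.1).comp_hasFDerivAt p hasFDerivAt_fst
  exact (hasFDerivAt_snd.sub (hsin.const_mul k)).congr_fderiv (by simp [smul_smul])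

lemma hasFDerivAt_potential (p : ℝ × ℝ) :
    HasFDerivAt (potential c k w)
      ((-(c * sin p.1) - w * k * cos p.1 * (p.2 - k * sin p.1)) • fst ℝ ℝ ℝ
        + (w * (p.2 - k * sin p.1)) • snd ℝ ℝ ℝ) p := by
  have hcos : HasFDerivAt (fun q : ℝ × ℝ => cos q.1) (-sin p.1 • fst ℝ ℝ ℝ) p :=
    (hasDerivAt_cos p.1).comp_hasFDerivAt p hasFDerivAt_fst
  have hu := hasFDerivAt_snd_sub_mul_sin_fst k p
  refine (((hcos.sub_const 1).const_mul c).add ((hu.pow 2).const_mul (w / 2))).congr_fderiv ?_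
  ext <;> simp <;> ring

lemma fderiv_potential_coordDir_zero :
    (fun p => fderiv ℝ (potential c k w) p (coordDir 0))
      = fun p => -(c * sin p.1) - w * k * cos p.1 * (p.2 - k * sin p.1) := by
  ext p
  simp [(hasFDerivAt_potential c k w p).fderiv, coordDir]

lemma fderiv_potential_coordDir_one :
    (fun p => fderiv ℝ (potential c k w) p (coordDir 1)) = fun p => w * (p.2 - k * sin p.1) := by
  ext p
  simp [(hasFDerivAt_potential c k w p).fderiv, coordDir]

lemma hasFDerivAt_fderiv_potential_coordDir_zero :
    HasFDerivAt (fun p : ℝ × ℝ => -(c * sin p.1) - w * k * cos p.1 * (p.2 - k * sin p.1))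
      ((k ^ 2 * w - c) • fst ℝ ℝ ℝ + (-k * w) • snd ℝ ℝ ℝ) (0, 0) := by
  have hsin := (hasDerivAt_sin _).comp_hasFDerivAt ((0, 0) : ℝ × ℝ) (hasFDerivAt_fst (𝕜 := ℝ))
  have hcos := (hasDerivAt_cos _).comp_hasFDerivAt ((0, 0) : ℝ × ℝ) (hasFDerivAt_fst (𝕜 := ℝ))
  have hu := hasFDerivAt_snd_sub_mul_sin_fst k (0, 0)
  refine ((hsin.const_mul c).neg.sub ((hcos.const_mul (w * k)).mul hu)).congr_fderiv ?_
  ext <;> simp <;> ring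

lemma hasFDerivAt_fderiv_potential_coordDir_one :
    HasFDerivAt (fun p : ℝ × ℝ => w * (p.2 - k * sin p.1))
      ((-k * w) • fst ℝ ℝ ℝ + w • snd ℝ ℝ ℝ) (0, 0) := by
  refine ((hasFDerivAt_snd_sub_mul_sin_fst k (0, 0)).const_mul w).congr_fderiv ?_
  ext <;> simp [mul_comm]

theorem fderiv_fderiv_potential_coordDir (i j : Fin 2) :
    fderiv ℝ (fun p => fderiv ℝ (potential c k w) p (coordDir j)) (0, 0) (coordDir i)
      = hessianAtOrigin c k w i j := by
  match j with
  | 0 =>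
    rw [fderiv_potential_coordDir_zero, (hasFDerivAt_fderiv_potential_coordDir_zero c k w).fderiv]
    fin_cases i <;> simp [coordDir, hessianAtOrigin]
  | 1 =>
    rw [fderiv_potential_coordDir_one, (hasFDerivAt_fderiv_potential_coordDir_one k w).fderiv]
    fin_cases i <;> simp [coordDir, hessianAtOrigin]

lemma dotProduct_hessianAtOrigin_mulVec (v : Fin 2 → ℝ) :
    v ⬝ᵥ hessianAtOrigin c k w *ᵥ v = w * (v 1 - k * v 0) ^ 2 + (-c) * v 0 ^ 2 := by
  simp only [dotProduct, mulVec, hessianAtOrigin, of_apply, cons_val', cons_val_fin_one,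
    Fin.sum_univ_two, cons_val_zero, cons_val_one]
  ring

variable {c w} in
theorem posDef_hessianAtOrigin (hc : c < 0) (hw : 0 < w) : (hessianAtOrigin c k w).PosDef := by
  refine posDef_iff_dotProduct_mulVec.mpr ⟨?_, fun v hv => ?_⟩
  · ext i j
    fin_cases i <;> fin_cases j <;> simp [hessianAtOrigin]
  rw [star_trivial, dotProduct_hessianAtOrigin_mulVec]
  rcases eq_or_ne (v 0) 0 with h0 | h0
  · have h1 : v 1 ≠ 0 := fun h1 => hv (by ext i; fin_cases i <;> assumption)
    have : 0 < w * v 1 ^ 2 := by positivity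
    simpa [h0] using this
  · have : 0 < -c * v 0 ^ 2 := mul_pos (neg_pos.mpr hc) (by positivity)
    nlinarith [sq_nonneg (v 1 - k * v 0)]

end ControlledPotential

open ControlledPotential in
theorem statement11 (σ₀ μ₀ w₁ : ℝ) (hσ₀ : σ₀ < 0) (hw₁ : 0 < w₁)
    (V : ℝ × ℝ → ℝ)
    (hV : ∀ p : ℝ × ℝ, V p =
      (1 / σ₀) * (Real.cos p.1 - 1)
        + (w₁ / 2) * (p.2 - (μ₀ / σ₀) * Real.sin p.1) ^ 2) :
    (∀ i j : Fin 2,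
      fderiv ℝ (fun p => fderiv ℝ V p (coordDir j)) (0, 0) (coordDir i) =
        !![μ₀ ^ 2 / σ₀ ^ 2 * w₁ - 1 / σ₀, -(μ₀ / σ₀) * w₁;
           -(μ₀ / σ₀) * w₁, w₁] i j) ∧
    (!![μ₀ ^ 2 / σ₀ ^ 2 * w₁ - 1 / σ₀, -(μ₀ / σ₀) * w₁;
        -(μ₀ / σ₀) * w₁, w₁]).PosDef := by
  obtain rfl : V = potential (1 / σ₀) (μ₀ / σ₀) w₁ := funext hV
  have hM : !![μ₀ ^ 2 / σ₀ ^ 2 * w₁ - 1 / σ₀, -(μ₀ / σ₀) * w₁; -(μ₀ / σ₀) * w₁, w₁]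
      = hessianAtOrigin (1 / σ₀) (μ₀ / σ₀) w₁ := by
    rw [hessianAtOrigin, div_pow]
  rw [hM]
  exact ⟨fderiv_fderiv_potential_coordDir _ _ _,
    posDef_hessianAtOrigin _ (one_div_neg.mpr hσ₀) hw₁⟩
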